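/- Let A be an algebra, Ω¹ an A-bimodule, and σ : Ω¹ ⊗_A Ω¹ → Ω¹ ⊗_A Ω¹ an A-bimodule map. Suppose σ admits an extension σ^{[2]} : Ω¹ ⊗_A Ω² → Ω² ⊗_A Ω¹ satisfying σ^{[2]} ∘ (id ⊗ ∧) = (∧ ⊗ id) ∘ σ₂ ∘ σ₁ on Ω¹ ⊗_A Ω¹ ⊗_A Ω¹, where σ₁ = σ⊗id, σ₂ = id⊗σ, and ∧ : Ω¹⊗_AΩ¹ → Ω² satisfies ∧∘σ = -∧. Then (∧ ⊗ id) ∘ σ₁ ∘ σ₂ ∘ σ₁ = (∧ ⊗ id) ∘ σ₂ ∘ σ₁ ∘ σ₂ as maps Ω¹ ⊗_A Ω¹ ⊗_A Ω¹ → Ω² ⊗_A Ω¹. -/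
import Mathlib


open TensorProduct

/-- Braid equation up to the wedge product: if `σ` extends to `σ^{[2]}` compatibly with
the wedge product and `∧ ∘ σ = -∧`, then
`(∧ ⊗ id) ∘ σ₁ ∘ σ₂ ∘ σ₁ = (∧ ⊗ id) ∘ σ₂ ∘ σ₁ ∘ σ₂`. -/
theorem braid_equation_up_to_wedge {R : Type*} [CommRing R]
    {Ω Ω2 : Type*} [AddCommGroup Ω] [Module R Ω] [AddCommGroup Ω2] [Module R Ω2]
    (σ : Ω ⊗[R] Ω →ₗ[R] Ω ⊗[R] Ω)
    (wedge : Ω ⊗[R] Ω →ₗ[R] Ω2)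
    (σ2ext : Ω ⊗[R] Ω2 →ₗ[R] Ω2 ⊗[R] Ω)
    -- σ₁ = σ ⊗ id and σ₂ = id ⊗ σ as maps on Ω ⊗ (Ω ⊗ Ω)
    (σ₁ : Ω ⊗[R] (Ω ⊗[R] Ω) →ₗ[R] Ω ⊗[R] (Ω ⊗[R] Ω))
    (hσ₁ : σ₁ = (TensorProduct.assoc R Ω Ω Ω).toLinearMap
        ∘ₗ (LinearMap.rTensor Ω σ) ∘ₗ (TensorProduct.assoc R Ω Ω Ω).symm.toLinearMap)
    (σ₂ : Ω ⊗[R] (Ω ⊗[R] Ω) →ₗ[R] Ω ⊗[R] (Ω ⊗[R] Ω))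
    (hσ₂ : σ₂ = LinearMap.lTensor Ω σ)
    (hwedge : wedge ∘ₗ σ = -wedge)
    (hext : σ2ext ∘ₗ LinearMap.lTensor Ω wedge
        = (LinearMap.rTensor Ω wedge)
          ∘ₗ (TensorProduct.assoc R Ω Ω Ω).symm.toLinearMap ∘ₗ σ₂ ∘ₗ σ₁) :
    (LinearMap.rTensor Ω wedge) ∘ₗ (TensorProduct.assoc R Ω Ω Ω).symm.toLinearMap
        ∘ₗ σ₁ ∘ₗ σ₂ ∘ₗ σ₁
      = (LinearMap.rTensor Ω wedge) ∘ₗ (TensorProduct.assoc R Ω Ω Ω).symm.toLinearMap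
        ∘ₗ σ₂ ∘ₗ σ₁ ∘ₗ σ₂ := by
  have hA : (LinearMap.rTensor Ω wedge) ∘ₗ (TensorProduct.assoc R Ω Ω Ω).symm.toLinearMap
      ∘ₗ σ₁ = -((LinearMap.rTensor Ω wedge) ∘ₗ (TensorProduct.assoc R Ω Ω Ω).symm.toLinearMap) := by
    have hw : ∀ v, wedge (σ v) = - wedge v := fun v => by
      simpa using LinearMap.congr_fun hwedge v
    ext x y z
    simp [hσ₁, hw, TensorProduct.neg_tmul]
  have hB : (LinearMap.rTensor Ω wedge) ∘ₗ (TensorProduct.assoc R Ω Ω Ω).symm.toLinearMap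
      ∘ₗ σ₂ ∘ₗ σ₁ ∘ₗ σ₂
      = -((LinearMap.rTensor Ω wedge) ∘ₗ (TensorProduct.assoc R Ω Ω Ω).symm.toLinearMap
      ∘ₗ σ₂ ∘ₗ σ₁) := by
    have h1 : σ2ext ∘ₗ LinearMap.lTensor Ω wedge ∘ₗ σ₂
        = -(σ2ext ∘ₗ LinearMap.lTensor Ω wedge) := by
      rw [hσ₂, ← LinearMap.lTensor_comp, hwedge, LinearMap.lTensor_neg]
      ext x; simp
    calc (LinearMap.rTensor Ω wedge) ∘ₗ (TensorProduct.assoc R Ω Ω Ω).symm.toLinearMap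
          ∘ₗ σ₂ ∘ₗ σ₁ ∘ₗ σ₂
        = (σ2ext ∘ₗ LinearMap.lTensor Ω wedge) ∘ₗ σ₂ := by
          rw [hext]; ext x; simp
      _ = -(σ2ext ∘ₗ LinearMap.lTensor Ω wedge) := by
          rw [LinearMap.comp_assoc, h1]
      _ = -((LinearMap.rTensor Ω wedge) ∘ₗ (TensorProduct.assoc R Ω Ω Ω).symm.toLinearMap
          ∘ₗ σ₂ ∘ₗ σ₁) := by rw [hext]
  calc (LinearMap.rTensor Ω wedge) ∘ₗ (TensorProduct.assoc R Ω Ω Ω).symm.toLinearMap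
        ∘ₗ σ₁ ∘ₗ σ₂ ∘ₗ σ₁
      = ((LinearMap.rTensor Ω wedge) ∘ₗ (TensorProduct.assoc R Ω Ω Ω).symm.toLinearMap
        ∘ₗ σ₁) ∘ₗ σ₂ ∘ₗ σ₁ := by
        ext x; simp
    _ = -((LinearMap.rTensor Ω wedge) ∘ₗ (TensorProduct.assoc R Ω Ω Ω).symm.toLinearMap
        ∘ₗ σ₂ ∘ₗ σ₁) := by rw [hA]; ext x; simp
    _ = _ := hB.symm
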